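/- For every pure braid β ∈ B_n, writing SGE(β) = (M, id), the matrix M is symmetric: Mᵀ = M. -/

import Mathlib

/-- The braid relations. -/
def braidRels (n : ℕ) : Set (FreeGroup (Fin (n - 1))) :=
  {r | (∃ i j : Fin (n - 1), (j : ℕ) = (i : ℕ) + 1 ∧
        r = .of i * .of j * .of i * (.of j * .of i * .of j)⁻¹) ∨
       (∃ i j : Fin (n - 1), (i : ℕ) + 2 ≤ (j : ℕ) ∧
        r = .of i * .of j * (.of j * .of i)⁻¹)}

/-- The braid group `B_n`. -/
abbrev BraidGroup (n : ℕ) := PresentedGroup (braidRels n)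

/-- The Artin generator `σ_{k+1}` (0-based index `k`). -/
def braidGen {n : ℕ} (i : Fin (n - 1)) : BraidGroup n := PresentedGroup.of i

/-- The strand index `k`, viewed inside `Fin n`. -/
def lo {n : ℕ} (k : Fin (n - 1)) : Fin n := ⟨k, by have := k.isLt; omega⟩

/-- The strand index `k + 1`, viewed inside `Fin n`. -/
def hi {n : ℕ} (k : Fin (n - 1)) : Fin n := ⟨(k : ℕ) + 1, by have := k.isLt; omega⟩

/-- The action of `S_n` on `n × n` integer matrices, simultaneously permuting rows and
columns: `(π·M)[i,j] = M[π⁻¹ i, π⁻¹ j]`. -/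
def matPermAct (n : ℕ) :
    Equiv.Perm (Fin n) →* MulAut (Multiplicative (Matrix (Fin n) (Fin n) ℤ)) where
  toFun π :=
    { toFun := fun M => Multiplicative.ofAdd fun i j => Multiplicative.toAdd M (π⁻¹ i) (π⁻¹ j)
      invFun := fun M => Multiplicative.ofAdd fun i j => Multiplicative.toAdd M (π i) (π j)
      left_inv := fun M => by
        change (fun i j => (M : Matrix (Fin n) (Fin n) ℤ) (π⁻¹ (π i)) (π⁻¹ (π j))) = M
        simp
      right_inv := fun M => by
        change (fun i j => (M : Matrix (Fin n) (Fin n) ℤ) (π (π⁻¹ i)) (π (π⁻¹ j))) = M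
        simp
      map_mul' := fun M M' => rfl }
  map_one' := by ext M; simp
  map_mul' := fun π ρ => by
    ext M
    rfl

/-- The semidirect product `Mat_n(ℤ) ⋊ S_n`. -/
abbrev SGEGroup (n : ℕ) :=
  SemidirectProduct (Multiplicative (Matrix (Fin n) (Fin n) ℤ)) (Equiv.Perm (Fin n))
    (matPermAct n)

/-- The value `(O_{k,k+1}, (k, k+1))` of the super-Gauss-Epple homomorphism on the
generator `σ_k`, where `O_{i,j}` is the matrix with a single `1` entry at `(i,j)`. -/
def sgeGen {n : ℕ} (k : Fin (n - 1)) : SGEGroup n :=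
  ⟨Multiplicative.ofAdd (Matrix.single (lo k) (hi k) 1), Equiv.swap (lo k) (hi k)⟩


/-! The assignment `x = (M, π) ↦ (M - Mᵀ, π)` is an endomorphism of `Mat_n(ℤ) ⋊ S_n`, because
transposition commutes with the `S_n`-action, and so is the coboundary `π ↦ (U - π·U, π)` of the
matrix `U` with `U i j = 1` for `i < j` and `0` otherwise. Both send `SGE(σ_k)` to
`(O_{k,k+1} - O_{k+1,k}, (k, k+1))`, since the only inversion of the adjacent transposition
`(k, k+1)` is the pair `(k, k+1)`. Hence they agree on the whole image of `SGE`, and for a pure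
braid `M - Mᵀ = U - U = 0`. -/

open Matrix SemidirectProduct

section

variable {n : ℕ}

def antisymmPart (n : ℕ) :
    Multiplicative (Matrix (Fin n) (Fin n) ℤ) →* Multiplicative (Matrix (Fin n) (Fin n) ℤ) :=
  AddMonoidHom.toMultiplicative
    (AddMonoidHom.id _ - (transposeAddEquiv (Fin n) (Fin n) ℤ).toAddMonoidHom)

def sgeAntisymm (n : ℕ) : SGEGroup n →* SGEGroup n :=
  SemidirectProduct.map (antisymmPart n) (MonoidHom.id _) fun _ => rfl

theorem toAdd_sgeAntisymm_left (x : SGEGroup n) :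
    (sgeAntisymm n x).left.toAdd = x.left.toAdd - x.left.toAddᵀ := rfl

def upperOnes (n : ℕ) : Matrix (Fin n) (Fin n) ℤ := of fun i j => if i < j then 1 else 0

/-- `π ↦ (U - π·U, π)`, obtained as the conjugate of `inr` by `inl U`. -/
def upperOnesCoboundary (n : ℕ) : Equiv.Perm (Fin n) →* SGEGroup n :=
  (MulAut.conj (inl (Multiplicative.ofAdd (upperOnes n)))).toMonoidHom.comp inr

theorem toAdd_upperOnesCoboundary_left (π : Equiv.Perm (Fin n)) (i j : Fin n) :
    (upperOnesCoboundary n π).left.toAdd i j = upperOnes n i j - upperOnes n (π⁻¹ i) (π⁻¹ j) := by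
  rw [upperOnesCoboundary, MonoidHom.comp_apply, MulEquiv.coe_toMonoidHom, MulAut.conj_apply]
  simp only [mul_left, mul_right, inv_left, left_inl, right_inl, left_inr, right_inr, inv_one,
    map_one, MulAut.one_apply, mul_one, one_mul]
  rfl

theorem sgeAntisymm_sgeGen (k : Fin (n - 1)) :
    sgeAntisymm n (sgeGen k) = upperOnesCoboundary n (Equiv.swap (lo k) (hi k)) := by
  ext i j
  · rw [toAdd_sgeAntisymm_left, toAdd_upperOnesCoboundary_left, Equiv.swap_inv]
    have hk : (lo k).val + 1 = (hi k).val := rfl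
    simp only [sgeGen, Matrix.sub_apply, transpose_apply, toAdd_ofAdd, single, upperOnes,
      of_apply, Equiv.swap_apply_def, Fin.lt_def, ← Fin.val_eq_val]
    split_ifs <;> omega
  · rfl

end

open Matrix in
theorem SGE_pure_symmetric_general (n : ℕ)
    (SGE : BraidGroup n →* SGEGroup n)
    (hSGE : ∀ k : Fin (n - 1), SGE (braidGen k) = sgeGen k)
    (β : BraidGroup n) (hpure : (SGE β).right = 1) :
    (Multiplicative.toAdd (SGE β).left)ᵀ = Multiplicative.toAdd (SGE β).left := by
  have hcomm : (sgeAntisymm n).comp SGE = (upperOnesCoboundary n).comp (rightHom.comp SGE) :=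
    PresentedGroup.ext fun k => by
      show sgeAntisymm n (SGE (braidGen k)) = upperOnesCoboundary n (SGE (braidGen k)).right
      rw [hSGE]
      exact sgeAntisymm_sgeGen k
  have hβ : sgeAntisymm n (SGE β) = 1 := by
    simpa [hpure] using DFunLike.congr_fun hcomm β
  have hM := congrArg (fun x => x.left.toAdd) hβ
  rw [toAdd_sgeAntisymm_left] at hM
  exact (sub_eq_zero.mp hM).symm

open Matrix in
/-- For every pure braid `β`, writing `SGE(β) = (M, id)`, the matrix `M` is symmetric. -/
theorem SGE_pure_symmetric (n : ℕ) (hn : 2 ≤ n)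
    (SGE : BraidGroup n →* SGEGroup n)
    (hSGE : ∀ k : Fin (n - 1), SGE (braidGen k) = sgeGen k)
    (β : BraidGroup n) (hpure : (SGE β).right = 1) :
    (Multiplicative.toAdd (SGE β).left)ᵀ = Multiplicative.toAdd (SGE β).left :=
  SGE_pure_symmetric_general n SGE hSGE β hpure
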